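/- arXiv:2009.00176 — 2 statements merged into one kernel-verified Lean document; each statement's English description precedes it below -/
import Mathlib

section
/- For every formula A of the language L of intuitionistic predicate logic, the formula ◇_P A^t → A^t is provable in Q∘S4.t. -/
/-! ## Propositional intuitionistic formulas and IPC -/

inductive PropForm : Type
  | var : ℕ → PropForm
  | falsum : PropForm
  | and : PropForm → PropForm → PropForm
  | or : PropForm → PropForm → PropForm
  | impl : PropForm → PropForm → PropForm

/-- Hilbert-style intuitionistic propositional calculus. -/
inductive IPC : PropForm → Prop
  | ax1 (A B : PropForm) : IPC (A.impl (B.impl A))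
  | ax2 (A B C : PropForm) : IPC ((A.impl (B.impl C)).impl ((A.impl B).impl (A.impl C)))
  | andE1 (A B : PropForm) : IPC ((A.and B).impl A)
  | andE2 (A B : PropForm) : IPC ((A.and B).impl B)
  | andI (A B : PropForm) : IPC (A.impl (B.impl (A.and B)))
  | orI1 (A B : PropForm) : IPC (A.impl (A.or B))
  | orI2 (A B : PropForm) : IPC (B.impl (A.or B))
  | orE (A B C : PropForm) : IPC ((A.impl C).impl ((B.impl C).impl ((A.or B).impl C)))
  | exfalso (A : PropForm) : IPC (PropForm.falsum.impl A)
  | mp (A B : PropForm) : IPC (A.impl B) → IPC A → IPC B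

/-! ## Bimodal propositional formulas and S4.t -/

inductive BForm : Type
  | var : ℕ → BForm
  | falsum : BForm
  | impl : BForm → BForm → BForm
  | boxF : BForm → BForm
  | boxP : BForm → BForm

def BForm.neg (A : BForm) : BForm := A.impl .falsum
def BForm.diaF (A : BForm) : BForm := (A.neg.boxF).neg
def BForm.diaP (A : BForm) : BForm := (A.neg.boxP).neg

/-- The tense propositional logic S4.t: classical propositional logic, S4 axioms
for both `boxF` and `boxP`, the two tense axioms, MP and both necessitations. -/
inductive S4t : BForm → Prop
  | ax1 (A B : BForm) : S4t (A.impl (B.impl A))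
  | ax2 (A B C : BForm) : S4t ((A.impl (B.impl C)).impl ((A.impl B).impl (A.impl C)))
  | ax3 (A B : BForm) : S4t (((B.neg).impl (A.neg)).impl (A.impl B))
  | kF (A B : BForm) : S4t ((A.impl B).boxF.impl (A.boxF.impl B.boxF))
  | tF (A : BForm) : S4t (A.boxF.impl A)
  | fourF (A : BForm) : S4t (A.boxF.impl A.boxF.boxF)
  | kP (A B : BForm) : S4t ((A.impl B).boxP.impl (A.boxP.impl B.boxP))
  | tP (A : BForm) : S4t (A.boxP.impl A)
  | fourP (A : BForm) : S4t (A.boxP.impl A.boxP.boxP)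
  | tense1 (A : BForm) : S4t (A.impl A.diaF.boxP)
  | tense2 (A : BForm) : S4t (A.impl A.diaP.boxF)
  | mp (A B : BForm) : S4t (A.impl B) → S4t A → S4t B
  | necF (A : BForm) : S4t A → S4t A.boxF
  | necP (A : BForm) : S4t A → S4t A.boxP

/-! ## Predicate tense formulas (the language L_T) -/

/-- Formulas of the bimodal predicate language `L_T`.  The classical basis means
that `⊥, →, ∀, □F, □P` are primitive; the remaining connectives are the usual
classical abbreviations, defined below. -/
inductive TForm : Type
  | falsum : TForm
  | atom : ℕ → List ℕ → TForm
  | impl : TForm → TForm → TForm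
  | all : ℕ → TForm → TForm
  | boxF : TForm → TForm
  | boxP : TForm → TForm

def TForm.neg (A : TForm) : TForm := A.impl .falsum
def TForm.and (A B : TForm) : TForm := (A.impl B.neg).neg
def TForm.or (A B : TForm) : TForm := (A.neg).impl B
def TForm.iff (A B : TForm) : TForm := (A.impl B).and (B.impl A)
def TForm.ex (x : ℕ) (A : TForm) : TForm := (TForm.all x A.neg).neg
def TForm.diaF (A : TForm) : TForm := A.neg.boxF.neg
def TForm.diaP (A : TForm) : TForm := A.neg.boxP.neg

def TForm.freeVars : TForm → Finset ℕ
  | .falsum => ∅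
  | .atom _ args => args.toFinset
  | .impl A B => A.freeVars ∪ B.freeVars
  | .all x A => A.freeVars.erase x
  | .boxF A => A.freeVars
  | .boxP A => A.freeVars

/-- Replace every free occurrence of the variable `x` by `y`. -/
def TForm.subst (x y : ℕ) : TForm → TForm
  | .falsum => .falsum
  | .atom p args => .atom p (args.map fun v => if v = x then y else v)
  | .impl A B => .impl (A.subst x y) (B.subst x y)
  | .all z A => if z = x then .all z A else .all z (A.subst x y)
  | .boxF A => .boxF (A.subst x y)
  | .boxP A => .boxP (A.subst x y)

/-- `y` is substitutable for `x`: no free occurrence of `x` lies in the scope of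
a quantifier binding `y`. -/
def TForm.substOK (x y : ℕ) : TForm → Prop
  | .falsum => True
  | .atom _ _ => True
  | .impl A B => A.substOK x y ∧ B.substOK x y
  | .all z A => z = x ∨ ((z = y → x ∉ A.freeVars) ∧ A.substOK x y)
  | .boxF A => A.substOK x y
  | .boxP A => A.substOK x y

/-- Substitution of `L_T`-formulas for the propositional letters of a bimodal
propositional formula. -/
def BForm.tsubst (s : ℕ → TForm) : BForm → TForm
  | .var n => s n
  | .falsum => .falsum
  | .impl A B => .impl (A.tsubst s) (B.tsubst s)
  | .boxF A => .boxF (A.tsubst s)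
  | .boxP A => .boxP (A.tsubst s)

/-! ## The predicate tense logic Q∘S4.t -/

inductive QoS4t : TForm → Prop
  /-- all substitution instances of theorems of S4.t -/
  | s4t (φ : BForm) (s : ℕ → TForm) : S4t φ → QoS4t (φ.tsubst s)
  /-- (UI°)  ∀y(∀x A → A(y/x)) -/
  | ui (x y : ℕ) (A : TForm) (hok : A.substOK x y) :
      QoS4t (.all y ((TForm.all x A).impl (A.subst x y)))
  /-- ∀x(A → B) → (∀x A → ∀x B) -/
  | distrib (x : ℕ) (A B : TForm) :
      QoS4t ((TForm.all x (A.impl B)).impl ((TForm.all x A).impl (TForm.all x B)))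
  /-- ∀x∀y A ↔ ∀y∀x A -/
  | comm (x y : ℕ) (A : TForm) :
      QoS4t ((TForm.all x (TForm.all y A)).iff (TForm.all y (TForm.all x A)))
  /-- A → ∀x A, x not free in A -/
  | vac (x : ℕ) (A : TForm) (h : x ∉ A.freeVars) : QoS4t (A.impl (.all x A))
  /-- (NID)  ∀x A → A, x not free in A -/
  | nid (x : ℕ) (A : TForm) (h : x ∉ A.freeVars) : QoS4t ((TForm.all x A).impl A)
  /-- (CBF_F)  □F ∀x A → ∀x □F A -/
  | cbfF (x : ℕ) (A : TForm) : QoS4t ((TForm.all x A).boxF.impl (TForm.all x A.boxF))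
  | mp (A B : TForm) : QoS4t (A.impl B) → QoS4t A → QoS4t B
  | gen (x : ℕ) (A : TForm) : QoS4t A → QoS4t (.all x A)
  | necF (A : TForm) : QoS4t A → QoS4t A.boxF
  | necP (A : TForm) : QoS4t A → QoS4t A.boxP

/-! ## The language L of intuitionistic predicate logic and IQC -/

inductive IForm : Type
  | falsum : IForm
  | atom : ℕ → List ℕ → IForm
  | and : IForm → IForm → IForm
  | or : IForm → IForm → IForm
  | impl : IForm → IForm → IForm
  | all : ℕ → IForm → IForm
  | ex : ℕ → IForm → IForm

def IForm.freeVars : IForm → Finset ℕ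
  | .falsum => ∅
  | .atom _ args => args.toFinset
  | .and A B => A.freeVars ∪ B.freeVars
  | .or A B => A.freeVars ∪ B.freeVars
  | .impl A B => A.freeVars ∪ B.freeVars
  | .all x A => A.freeVars.erase x
  | .ex x A => A.freeVars.erase x

def IForm.subst (x y : ℕ) : IForm → IForm
  | .falsum => .falsum
  | .atom p args => .atom p (args.map fun v => if v = x then y else v)
  | .and A B => .and (A.subst x y) (B.subst x y)
  | .or A B => .or (A.subst x y) (B.subst x y)
  | .impl A B => .impl (A.subst x y) (B.subst x y)
  | .all z A => if z = x then .all z A else .all z (A.subst x y)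
  | .ex z A => if z = x then .ex z A else .ex z (A.subst x y)

def IForm.substOK (x y : ℕ) : IForm → Prop
  | .falsum => True
  | .atom _ _ => True
  | .and A B => A.substOK x y ∧ B.substOK x y
  | .or A B => A.substOK x y ∧ B.substOK x y
  | .impl A B => A.substOK x y ∧ B.substOK x y
  | .all z A => z = x ∨ ((z = y → x ∉ A.freeVars) ∧ A.substOK x y)
  | .ex z A => z = x ∨ ((z = y → x ∉ A.freeVars) ∧ A.substOK x y)

/-- Substitution of `L`-formulas for the propositional letters of an
intuitionistic propositional formula. -/
def PropForm.isubst (s : ℕ → IForm) : PropForm → IForm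
  | .var n => s n
  | .falsum => .falsum
  | .and A B => .and (A.isubst s) (B.isubst s)
  | .or A B => .or (A.isubst s) (B.isubst s)
  | .impl A B => .impl (A.isubst s) (B.isubst s)

/-- The intuitionistic predicate calculus IQC. -/
inductive IQC : IForm → Prop
  /-- all substitution instances of theorems of IPC -/
  | ipc (φ : PropForm) (s : ℕ → IForm) : IPC φ → IQC (φ.isubst s)
  /-- (UI)  ∀x A → A(y/x) -/
  | ui (x y : ℕ) (A : IForm) (hok : A.substOK x y) :
      IQC ((IForm.all x A).impl (A.subst x y))
  /-- A(y/x) → ∃x A -/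
  | exI (x y : ℕ) (A : IForm) (hok : A.substOK x y) :
      IQC ((A.subst x y).impl (IForm.ex x A))
  /-- ∀x(A → B) → (A → ∀x B), x not free in A -/
  | allImp (x : ℕ) (A B : IForm) (h : x ∉ A.freeVars) :
      IQC ((IForm.all x (A.impl B)).impl (A.impl (IForm.all x B)))
  /-- ∀x(A → B) → (∃x A → B), x not free in B -/
  | exImp (x : ℕ) (A B : IForm) (h : x ∉ B.freeVars) :
      IQC ((IForm.all x (A.impl B)).impl ((IForm.ex x A).impl B))
  | mp (A B : IForm) : IQC (A.impl B) → IQC A → IQC B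
  | gen (x : ℕ) (A : IForm) : IQC A → IQC (.all x A)

/-! ## The temporal Gödel translation -/

def IForm.t : IForm → TForm
  | .falsum => .falsum
  | .atom p args => .boxF (.atom p args)
  | .and A B => TForm.and A.t B.t
  | .or A B => TForm.or A.t B.t
  | .impl A B => .boxF (A.t.impl B.t)
  | .all x A => .boxF (.all x A.t)
  | .ex x A => TForm.diaP (TForm.ex x A.t)

/-- `closure [x₁,…,xₙ] A = ∀x₁ ⋯ ∀xₙ A`. -/
def TForm.closure (xs : List ℕ) (A : TForm) : TForm := xs.foldr TForm.all A

/-! ## Generalized Kripke semantics for Q∘S4.t -/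

/-- A Q∘S4.t-frame: a reflexive transitive relation on a nonempty set of worlds,
a nonempty constant outer domain `U`, and nonempty increasing inner domains. -/
structure TFrame where
  W : Type
  U : Type
  hW : Nonempty W
  hU : Nonempty U
  R : W → W → Prop
  refl : ∀ w, R w w
  trans : ∀ {u v w}, R u v → R v w → R u w
  D : W → Set U
  Dne : ∀ w, (D w).Nonempty
  Dmono : ∀ {w v}, R w v → D w ⊆ D v

/-- A model based on a Q∘S4.t-frame: interprets each predicate symbol at each
world as a relation on the outer domain. -/
structure TModel (F : TFrame) where
  I : F.W → ℕ → List F.U → Prop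

/-- Truth of an `L_T`-formula at a world under an assignment. -/
def TModel.truth {F : TFrame} (M : TModel F) : F.W → (ℕ → F.U) → TForm → Prop
  | _, _, .falsum => False
  | w, σ, .atom p args => M.I w p (args.map σ)
  | w, σ, .impl A B => M.truth w σ A → M.truth w σ B
  | w, σ, .all x A =>
      ∀ τ : ℕ → F.U, (∀ y, y ≠ x → τ y = σ y) → τ x ∈ F.D w → M.truth w τ A
  | w, σ, .boxF A => ∀ v, F.R w v → M.truth v σ A
  | w, σ, .boxP A => ∀ v, F.R v w → M.truth v σ A

/-- Validity of an `L_T`-formula in a Q∘S4.t-frame. -/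
def TFrame.valid (F : TFrame) (A : TForm) : Prop :=
  ∀ M : TModel F, ∀ w : F.W, ∀ σ : ℕ → F.U, M.truth w σ A

/-! ## Kripke semantics for IQC -/

/-- An IQC-frame: a partial order on a nonempty set of worlds with nonempty
increasing domains. -/
structure IFrame where
  W : Type
  α : Type
  hW : Nonempty W
  R : W → W → Prop
  refl : ∀ w, R w w
  trans : ∀ {u v w}, R u v → R v w → R u w
  antisymm : ∀ {u v}, R u v → R v u → u = v
  D : W → Set α
  Dne : ∀ w, (D w).Nonempty
  Dmono : ∀ {w v}, R w v → D w ⊆ D v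

/-- An IQC-model: `I w P ⊆ (D w)ⁿ`, increasing along `R`. -/
structure IModel (F : IFrame) where
  I : F.W → ℕ → List F.α → Prop
  Isub : ∀ w p as, I w p as → ∀ a ∈ as, a ∈ F.D w
  Imono : ∀ {w v} (p : ℕ) (as : List F.α), F.R w v → I w p as → I v p as

/-- Intuitionistic truth of an `L`-formula at a world under an assignment. -/
def IModel.truth {F : IFrame} (M : IModel F) : F.W → (ℕ → F.α) → IForm → Prop
  | _, _, .falsum => False
  | w, σ, .atom p args => M.I w p (args.map σ)
  | w, σ, .and A B => M.truth w σ A ∧ M.truth w σ B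
  | w, σ, .or A B => M.truth w σ A ∨ M.truth w σ B
  | w, σ, .impl A B => ∀ v, F.R w v → M.truth v σ A → M.truth v σ B
  | w, σ, .all x A =>
      ∀ v, F.R w v → ∀ τ : ℕ → F.α, (∀ y, y ≠ x → τ y = σ y) → τ x ∈ F.D v →
        M.truth v τ A
  | w, σ, .ex x A =>
      ∃ τ : ℕ → F.α, (∀ y, y ≠ x → τ y = σ y) ∧ τ x ∈ F.D w ∧ M.truth w τ A

/-! ## The associated Q∘S4.t-model M̄ -/

/-- The Q∘S4.t-frame associated to an IQC-frame: same worlds and relation,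
outer domain `U = ⋃ { D_w ∣ w ∈ W }`, same inner domains. -/
def IFrame.bar (F : IFrame) : TFrame where
  W := F.W
  U := {a : F.α // ∃ w, a ∈ F.D w}
  hW := F.hW
  hU := by
    obtain ⟨w⟩ := F.hW
    obtain ⟨a, ha⟩ := F.Dne w
    exact ⟨⟨a, w, ha⟩⟩
  R := F.R
  refl := F.refl
  trans := F.trans
  D := fun w => {a | a.1 ∈ F.D w}
  Dne := fun w => by
    obtain ⟨a, ha⟩ := F.Dne w
    exact ⟨⟨a, w, ha⟩, ha⟩
  Dmono := fun h _ ha => F.Dmono h ha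

/-- The Q∘S4.t-model `M̄` associated to an IQC-model `M`. -/
def IModel.bar {F : IFrame} (M : IModel F) : TModel F.bar where
  I := fun w p as => M.I w p (as.map Subtype.val)

/-! ### Auxiliary machinery: derivations with hypotheses over S4.t -/

inductive S4tDer (Γ : List BForm) : BForm → Prop
  | hyp {A : BForm} : A ∈ Γ → S4tDer Γ A
  | thm {A : BForm} : S4t A → S4tDer Γ A
  | mp {A B : BForm} : S4tDer Γ (A.impl B) → S4tDer Γ A → S4tDer Γ B

lemma S4tDer.hyp' (Γ : List BForm) (A : BForm) (h : A ∈ Γ := by simp) :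
    S4tDer Γ A := .hyp h

lemma S4t.id (A : BForm) : S4t (A.impl A) :=
  S4t.mp _ _ (S4t.mp _ _ (S4t.ax2 A (A.impl A) A) (S4t.ax1 A (A.impl A))) (S4t.ax1 A A)

lemma S4tDer.deduction {Γ : List BForm} {A B : BForm}
    (h : S4tDer (A :: Γ) B) : S4tDer Γ (A.impl B) := by
  induction h with
  | hyp h =>
      rcases List.mem_cons.1 h with rfl | h
      · exact .thm (S4t.id _)
      · exact .mp (.thm (S4t.ax1 _ _)) (.hyp h)
  | thm h => exact .mp (.thm (S4t.ax1 _ _)) (.thm h)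
  | mp _ _ ih1 ih2 => exact .mp (.mp (.thm (S4t.ax2 _ _ _)) ih1) ih2

lemma S4tDer.toS4t {A : BForm} (h : S4tDer [] A) : S4t A := by
  induction h with
  | hyp h => simp at h
  | thm h => exact h
  | mp _ _ ih1 ih2 => exact S4t.mp _ _ ih1 ih2

lemma S4t.dni (A : BForm) : S4t (A.impl A.neg.neg) :=
  S4tDer.toS4t <| .deduction <| .deduction <|
    .mp (.hyp' _ A.neg) (.hyp' _ A)

lemma S4t.dne (A : BForm) : S4t (A.neg.neg.impl A) :=
  S4t.mp _ _ (S4t.ax3 A.neg.neg A) (S4t.dni A.neg)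

lemma S4t.contrapose (A B : BForm) : S4t ((A.impl B).impl (B.neg.impl A.neg)) :=
  S4tDer.toS4t <| .deduction <| .deduction <| .deduction <|
    .mp (.hyp' _ B.neg) (.mp (.hyp' _ (A.impl B)) (.hyp' _ A))

lemma S4t.efq (A : BForm) : S4t (BForm.falsum.impl A) :=
  S4t.mp _ _ (S4t.ax3 BForm.falsum A)
    (S4t.mp _ _ (S4t.ax1 BForm.falsum.neg A.neg) (S4t.id BForm.falsum))

lemma S4t.comp {A B C : BForm} (h1 : S4t (A.impl B)) (h2 : S4t (B.impl C)) :
    S4t (A.impl C) :=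
  S4tDer.toS4t <| .deduction <| .mp (.thm h2) (.mp (.thm h1) (.hyp' _ A))

lemma S4t.monoF {A B : BForm} (h : S4t (A.impl B)) : S4t (A.boxF.impl B.boxF) :=
  S4t.mp _ _ (S4t.kF A B) (S4t.necF _ h)

lemma S4t.monoP {A B : BForm} (h : S4t (A.impl B)) : S4t (A.boxP.impl B.boxP) :=
  S4t.mp _ _ (S4t.kP A B) (S4t.necP _ h)

lemma S4t.monoDiaP {A B : BForm} (h : S4t (A.impl B)) :
    S4t (A.diaP.impl B.diaP) :=
  S4t.mp _ _ (S4t.contrapose _ _)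
    (S4t.monoP (S4t.mp _ _ (S4t.contrapose A B) h))

/-- ◇P □F B → B -/
lemma S4t.lemA (B : BForm) : S4t ((B.boxF.diaP).impl B) := by
  have step1 : S4t (B.neg.impl ((B.neg.neg.boxF).neg.boxP)) := S4t.tense1 B.neg
  have step2 : S4t (((B.neg.neg.boxF).neg.boxP).impl ((B.boxF.neg).boxP)) :=
    S4t.monoP (S4t.mp _ _ (S4t.contrapose _ _) (S4t.monoF (S4t.dni B)))
  have step3 : S4t (B.neg.impl ((B.boxF.neg).boxP)) := S4t.comp step1 step2
  exact S4t.comp (S4t.mp _ _ (S4t.contrapose _ _) step3) (S4t.dne B)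

/-- ◇P □F B → □F B -/
lemma S4t.lemBoxF (B : BForm) : S4t ((B.boxF.diaP).impl B.boxF) :=
  S4t.comp (S4t.monoDiaP (S4t.fourF B)) (S4t.lemA B.boxF)

/-- ◇P ⊥ → ⊥ -/
lemma S4t.lemFalsum : S4t ((BForm.falsum.diaP).impl BForm.falsum) :=
  S4tDer.toS4t <| .deduction <|
    .mp (.hyp' _ BForm.falsum.diaP)
      (.thm (S4t.necP _ (S4t.id BForm.falsum)))

/-- ◇P ◇P p → ◇P p -/
lemma S4t.lemDia4 (p : BForm) : S4t ((p.diaP.diaP).impl p.diaP) := by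
  have step1 : S4t ((p.diaP.neg).impl ((p.diaP.neg).boxP)) :=
    S4t.comp (S4t.comp (S4t.dne (p.neg.boxP)) (S4t.fourP p.neg))
      (S4t.monoP (S4t.dni (p.neg.boxP)))
  exact S4t.comp (S4t.mp _ _ (S4t.contrapose _ _) step1) (S4t.dne p.diaP)

def BForm.band (A B : BForm) : BForm := (A.impl B.neg).neg

def BForm.bor (A B : BForm) : BForm := A.neg.impl B

lemma S4t.andE1 (p q : BForm) : S4t ((p.band q).impl p) := by
  refine S4t.mp _ _ (S4t.ax3 (p.band q) p) ?_
  refine S4t.comp ?_ (S4t.dni (p.impl q.neg))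
  exact S4tDer.toS4t <| .deduction <| .deduction <|
    .mp (.thm (S4t.efq q.neg)) (.mp (.hyp' _ p.neg) (.hyp' _ p))

lemma S4t.andE2 (p q : BForm) : S4t ((p.band q).impl q) := by
  refine S4t.mp _ _ (S4t.ax3 (p.band q) q) ?_
  exact S4t.comp (S4t.ax1 q.neg p) (S4t.dni (p.impl q.neg))

lemma S4t.andI (p q : BForm) : S4t (p.impl (q.impl (p.band q))) :=
  S4tDer.toS4t <| .deduction <| .deduction <| .deduction <|
    .mp (.mp (.hyp' _ (p.impl q.neg)) (.hyp' _ p)) (.hyp' _ q)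

/-- the derived K-rule for ◇P -/
lemma S4t.ruleR {X Y Z : BForm} (h : S4t (X.impl (Y.impl Z))) :
    S4t (X.boxP.impl (Y.diaP.impl Z.diaP)) := by
  have h1 : S4t (X.impl (Z.neg.impl Y.neg)) :=
    S4tDer.toS4t <| .deduction <| .deduction <| .deduction <|
      .mp (.hyp' _ Z.neg)
        (.mp (.mp (.thm h) (.hyp' _ X)) (.hyp' _ Y))
  have h2 : S4t (X.boxP.impl ((Z.neg.boxP).impl (Y.neg.boxP))) :=
    S4t.comp (S4t.monoP h1) (S4t.kP Z.neg Y.neg)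
  exact S4tDer.toS4t <| .deduction <| .deduction <| .deduction <|
    .mp (.hyp' _ Y.diaP)
      (.mp (.mp (.thm h2) (.hyp' _ X.boxP)) (.hyp' _ (Z.neg.boxP)))

lemma S4t.thmAnd (p q : BForm) :
    S4t ((p.diaP.impl p).impl ((q.diaP.impl q).impl
      (((p.band q).diaP).impl (p.band q)))) := by
  refine S4tDer.toS4t <| .deduction <| .deduction <| .deduction ?_
  have hp : S4tDer [(p.band q).diaP, q.diaP.impl q, p.diaP.impl p] p :=
    .mp (.hyp' _ (p.diaP.impl p))
      (.mp (.thm (S4t.monoDiaP (S4t.andE1 p q))) (.hyp' _ ((p.band q).diaP)))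
  have hq : S4tDer [(p.band q).diaP, q.diaP.impl q, p.diaP.impl p] q :=
    .mp (.hyp' _ (q.diaP.impl q))
      (.mp (.thm (S4t.monoDiaP (S4t.andE2 p q))) (.hyp' _ ((p.band q).diaP)))
  exact .mp (.mp (.thm (S4t.andI p q)) hp) hq

lemma S4t.thmOr (p q : BForm) :
    S4t ((p.diaP.impl p).impl ((q.diaP.impl q).impl
      (((p.bor q).diaP).impl (p.bor q)))) := by
  refine S4tDer.toS4t <| .deduction <| .deduction <| .deduction <| .deduction ?_
  set Γ : List BForm := [p.neg, (p.bor q).diaP, q.diaP.impl q, p.diaP.impl p]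
    with hΓ
  have hnp : S4tDer Γ (p.neg.boxP) :=
    .mp (.thm (S4t.dne (p.neg.boxP)))
      (.mp (.mp (.thm (S4t.contrapose p.diaP p)) (.hyp' _ (p.diaP.impl p) (by simp [hΓ])))
        (.hyp' _ p.neg (by simp [hΓ])))
  have taut : S4t (p.neg.impl ((p.bor q).impl q)) :=
    S4tDer.toS4t <| .deduction <| .deduction <|
      .mp (.hyp' _ (p.bor q)) (.hyp' _ p.neg)
  have hdq : S4tDer Γ q.diaP :=
    .mp (.mp (.thm (S4t.ruleR taut)) hnp) (.hyp' _ ((p.bor q).diaP) (by simp [hΓ]))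
  exact .mp (.hyp' _ (q.diaP.impl q) (by simp [hΓ])) hdq

/-- For every formula `A` of `L`, the formula `◇P A^t → A^t` is provable in
Q∘S4.t. -/
theorem diaP_translation_implies_translation (A : IForm) :
    QoS4t ((TForm.diaP A.t).impl A.t) := by
  induction A with
  | falsum =>
      exact QoS4t.s4t ((BForm.falsum.diaP).impl BForm.falsum)
        (fun _ => TForm.falsum) S4t.lemFalsum
  | atom p args =>
      exact QoS4t.s4t (((BForm.var 0).boxF.diaP).impl (BForm.var 0).boxF)
        (fun _ => TForm.atom p args) (S4t.lemBoxF (BForm.var 0))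
  | and A B ihA ihB =>
      have h := QoS4t.s4t _
        (fun n => match n with | 0 => A.t | _ => B.t)
        (S4t.thmAnd (BForm.var 0) (BForm.var 1))
      exact QoS4t.mp _ _ (QoS4t.mp _ _ h ihA) ihB
  | or A B ihA ihB =>
      have h := QoS4t.s4t _
        (fun n => match n with | 0 => A.t | _ => B.t)
        (S4t.thmOr (BForm.var 0) (BForm.var 1))
      exact QoS4t.mp _ _ (QoS4t.mp _ _ h ihA) ihB
  | impl A B ihA ihB =>
      exact QoS4t.s4t (((BForm.var 0).boxF.diaP).impl (BForm.var 0).boxF)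
        (fun _ => A.t.impl B.t) (S4t.lemBoxF (BForm.var 0))
  | all x A ih =>
      exact QoS4t.s4t (((BForm.var 0).boxF.diaP).impl (BForm.var 0).boxF)
        (fun _ => TForm.all x A.t) (S4t.lemBoxF (BForm.var 0))
  | ex x A ih =>
      exact QoS4t.s4t (((BForm.var 0).diaP.diaP).impl (BForm.var 0).diaP)
        (fun _ => TForm.ex x A.t) (S4t.lemDia4 (BForm.var 0))
end

section
/- Let A be a formula of the language L of intuitionistic predicate logic with free variables x₁, …, xₙ, M = (F, I) an IQC-model based on an IQC-frame F = (W, R, D), and w ∈ W. Then M ⊨_w A (intuitionistic truth at w under all w-assignments) if and only if M̄ ⊨_w ∀x₁ ⋯ ∀xₙ A^t (classical temporal truth at w in the associated Q∘S4.t-model M̄). -/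
/-! By induction on `A`, `M ⊨_w^σ A` iff `M̄ ⊨_w^σ A^t` for every assignment `σ` into the outer
domain, with no condition on `σ`. The `□_F` in the translations of atoms, implications and
universals expresses persistence and the quantification over later worlds. For `∃`, `◇_P ∃x A^t`
asks for a witness at some earlier world; since translated formulas persist forward and domains
increase, this is the same as a witness at `w`. The universal closure then ranges exactly over the
assignments sending the free variables of `A` into `D_w`, and intuitionistic truth depends only on
the values of the free variables. -/

theorem Set.EqOn.update {α β : Type*} [DecidableEq α] {f g : α → β} {s : Set α} {x : α}
    (h : Set.EqOn f g (s \ {x})) (b : β) :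
    Set.EqOn (Function.update f x b) (Function.update g x b) s := by
  intro y hy
  by_cases hyx : y = x
  · simp [hyx]
  · simp only [Function.update_of_ne hyx]
    exact h ⟨hy, hyx⟩

theorem forall_variant_iff {ι β : Type*} [DecidableEq ι] (σ : ι → β) (x : ι) (S : Set β)
    (P : (ι → β) → Prop) :
    (∀ τ : ι → β, (∀ y, y ≠ x → τ y = σ y) → τ x ∈ S → P τ) ↔
      ∀ a ∈ S, P (Function.update σ x a) := by
  refine ⟨fun h a ha => h _ (fun y hy => Function.update_of_ne hy a σ) (by simpa), ?_⟩
  intro h τ hτ hx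
  rw [Function.eq_update_iff.mpr ⟨rfl, hτ⟩]
  exact h _ hx

theorem exists_variant_iff {ι β : Type*} [DecidableEq ι] (σ : ι → β) (x : ι) (S : Set β)
    (P : (ι → β) → Prop) :
    (∃ τ : ι → β, (∀ y, y ≠ x → τ y = σ y) ∧ τ x ∈ S ∧ P τ) ↔
      ∃ a ∈ S, P (Function.update σ x a) := by
  simpa using (forall_variant_iff σ x S fun τ => ¬P τ).not

namespace TModel

variable {F : TFrame} (M : TModel F)

theorem truth_and (w : F.W) (σ : ℕ → F.U) (A B : TForm) :
    M.truth w σ (A.and B) ↔ M.truth w σ A ∧ M.truth w σ B := by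
  simp [TForm.and, TForm.neg, truth]

theorem truth_or (w : F.W) (σ : ℕ → F.U) (A B : TForm) :
    M.truth w σ (A.or B) ↔ M.truth w σ A ∨ M.truth w σ B := by
  simp only [TForm.or, TForm.neg, truth, imp_false]
  exact or_iff_not_imp_left.symm

theorem truth_diaP (w : F.W) (σ : ℕ → F.U) (A : TForm) :
    M.truth w σ A.diaP ↔ ∃ v, F.R v w ∧ M.truth v σ A := by
  simp [TForm.diaP, TForm.neg, truth]

theorem truth_all (w : F.W) (σ : ℕ → F.U) (x : ℕ) (A : TForm) :
    M.truth w σ (.all x A) ↔ ∀ a ∈ F.D w, M.truth w (Function.update σ x a) A :=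
  forall_variant_iff σ x _ _

theorem truth_ex (w : F.W) (σ : ℕ → F.U) (x : ℕ) (A : TForm) :
    M.truth w σ (A.ex x) ↔ ∃ a ∈ F.D w, M.truth w (Function.update σ x a) A := by
  refine Iff.trans ?_ (exists_variant_iff σ x (F.D w) fun τ => M.truth w τ A)
  simp [TForm.ex, TForm.neg, truth]

theorem truth_t_of_rel (A : IForm) {v w : F.W} (hvw : F.R v w) (σ : ℕ → F.U)
    (h : M.truth v σ A.t) : M.truth w σ A.t := by
  induction A generalizing σ with
  | falsum => exact h
  | atom | impl | all => exact fun u hu => h u (F.trans hvw hu)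
  | and A B ihA ihB =>
    simp only [IForm.t, truth_and] at h ⊢
    exact ⟨ihA σ h.1, ihB σ h.2⟩
  | or A B ihA ihB =>
    simp only [IForm.t, truth_or] at h ⊢
    exact h.imp (ihA σ) (ihB σ)
  | ex x A =>
    simp only [IForm.t, truth_diaP] at h ⊢
    obtain ⟨u, hu, hA⟩ := h
    exact ⟨u, F.trans hu hvw, hA⟩

theorem truth_closure (B : TForm) (xs : List ℕ) (w : F.W) (σ : ℕ → F.U) :
    M.truth w σ (B.closure xs) ↔
      ∀ τ : ℕ → F.U, (∀ y ∉ xs, τ y = σ y) → (∀ y ∈ xs, τ y ∈ F.D w) → M.truth w τ B := by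
  induction xs generalizing σ with
  | nil =>
    refine ⟨fun h τ hτ _ => ?_, fun h => h σ (fun _ _ => rfl) (by simp)⟩
    rwa [funext fun y => hτ y List.not_mem_nil]
  | cons x xs ih =>
    simp only [TForm.closure, List.foldr_cons] at ih ⊢
    rw [truth_all]
    simp only [ih]
    constructor
    · intro h τ hτ hD
      refine h (τ x) (hD x List.mem_cons_self) τ (fun y hy => ?_) fun y hy => hD y (by simp [hy])
      by_cases hyx : y = x
      · simp [hyx]
      · rw [Function.update_of_ne hyx]
        exact hτ y (by simp [hyx, hy])
    · intro h a ha τ hτ hD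
      refine h τ (fun y hy => ?_) fun y hy => ?_
      · rw [List.mem_cons, not_or] at hy
        rw [hτ y hy.2, Function.update_of_ne hy.1]
      · rcases List.mem_cons.mp hy with rfl | hy
        · by_cases hyxs : y ∈ xs
          · exact hD y hyxs
          · simpa [hτ y hyxs] using ha
        · exact hD y hy

end TModel

namespace IModel

variable {F : IFrame} (M : IModel F)

theorem truth_all (w : F.W) (σ : ℕ → F.α) (x : ℕ) (A : IForm) :
    M.truth w σ (.all x A) ↔
      ∀ v, F.R w v → ∀ a ∈ F.D v, M.truth v (Function.update σ x a) A :=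
  forall_congr' fun _ => forall_congr' fun _ => forall_variant_iff σ x _ _

theorem truth_ex (w : F.W) (σ : ℕ → F.α) (x : ℕ) (A : IForm) :
    M.truth w σ (.ex x A) ↔ ∃ a ∈ F.D w, M.truth w (Function.update σ x a) A :=
  exists_variant_iff σ x _ _

theorem truth_congr (A : IForm) (w : F.W) {σ₁ σ₂ : ℕ → F.α} (h : Set.EqOn σ₁ σ₂ A.freeVars) :
    M.truth w σ₁ A ↔ M.truth w σ₂ A := by
  induction A generalizing w σ₁ σ₂ with
  | falsum => rfl
  | atom p args =>
    simp only [truth]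
    rw [List.map_congr_left fun a ha => h (by simpa [IForm.freeVars] using ha)]
  | and A B ihA ihB =>
    simp only [IForm.freeVars, Finset.coe_union] at h
    exact and_congr (ihA w (h.mono Set.subset_union_left)) (ihB w (h.mono Set.subset_union_right))
  | or A B ihA ihB =>
    simp only [IForm.freeVars, Finset.coe_union] at h
    exact or_congr (ihA w (h.mono Set.subset_union_left)) (ihB w (h.mono Set.subset_union_right))
  | impl A B ihA ihB =>
    simp only [IForm.freeVars, Finset.coe_union] at h
    exact forall₂_congr fun v _ =>
      imp_congr (ihA v (h.mono Set.subset_union_left)) (ihB v (h.mono Set.subset_union_right))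
  | all x A ih =>
    simp only [IForm.freeVars, Finset.coe_erase] at h
    rw [truth_all, truth_all]
    exact forall₂_congr fun v _ => forall₂_congr fun a _ => ih v (h.update a)
  | ex x A ih =>
    simp only [IForm.freeVars, Finset.coe_erase] at h
    rw [truth_ex, truth_ex]
    exact exists_congr fun a => and_congr_right fun _ => ih w (h.update a)

end IModel

theorem IFrame.forall_mem_bar_D_iff (F : IFrame) (v : F.W) (P : F.α → Prop) :
    (∀ b ∈ F.bar.D v, P b.1) ↔ ∀ a ∈ F.D v, P a :=
  ⟨fun h a ha => h ⟨a, v, ha⟩ ha, fun h b hb => h b.1 hb⟩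

-- `rw [Function.comp_update]` fails on such goals: `F.bar.U` is a subtype only after unfolding
-- `IFrame.bar`.
theorem IModel.truth_val_comp_update {F : IFrame} (M : IModel F) (w : F.W) (σ : ℕ → F.bar.U)
    (x : ℕ) (b : F.bar.U) (A : IForm) :
    M.truth w (Subtype.val ∘ Function.update σ x b) A ↔
      M.truth w (Function.update (Subtype.val ∘ σ) x b.1) A :=
  iff_of_eq (congrArg (M.truth w · A) (Function.comp_update _ _ _ _))

theorem IModel.truth_iff_bar_truth_t {F : IFrame} (M : IModel F) (A : IForm) (w : F.W)
    (σ : ℕ → F.bar.U) : M.truth w (Subtype.val ∘ σ) A ↔ M.bar.truth w σ A.t := by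
  induction A generalizing w σ with
  | falsum => rfl
  | atom p args =>
    have hmap : args.map (Subtype.val ∘ σ) = (args.map σ).map Subtype.val := (List.map_map ..).symm
    show M.I w p (args.map (Subtype.val ∘ σ)) ↔ ∀ v, F.R w v → M.I v p ((args.map σ).map Subtype.val)
    rw [hmap]
    exact ⟨fun h v hv => M.Imono p _ hv h, fun h => h w (F.refl w)⟩
  | and A B ihA ihB =>
    exact (and_congr (ihA w σ) (ihB w σ)).trans (M.bar.truth_and ..).symm
  | or A B ihA ihB =>
    exact (or_congr (ihA w σ) (ihB w σ)).trans (M.bar.truth_or ..).symm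
  | impl A B ihA ihB => exact forall₂_congr fun v _ => imp_congr (ihA v σ) (ihB v σ)
  | all x A ih =>
    rw [IModel.truth_all]
    refine forall₂_congr fun v _ => .trans ?_ (M.bar.truth_all ..).symm
    exact (F.forall_mem_bar_D_iff v _).symm.trans
      (forall₂_congr fun b _ => (M.truth_val_comp_update ..).symm.trans (ih v _))
  | ex x A ih =>
    refine (M.truth_ex ..).trans (.trans ?_ (M.bar.truth_diaP ..).symm)
    constructor
    · rintro ⟨a, ha, h⟩
      exact ⟨w, F.refl w, (TModel.truth_ex ..).2
        ⟨⟨a, w, ha⟩, ha, (ih w _).1 ((M.truth_val_comp_update ..).2 h)⟩⟩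
    · rintro ⟨v, hvw, hv⟩
      obtain ⟨b, hb, h⟩ := (TModel.truth_ex ..).1 hv
      exact ⟨b.1, F.Dmono hvw hb,
        (M.truth_val_comp_update ..).1 ((ih w _).2 (M.bar.truth_t_of_rel A hvw _ h))⟩

theorem iqc_truth_iff_bar_closure_truth_general (F : IFrame) (M : IModel F) (A : IForm)
    (xs : List ℕ) (hfv : xs.toFinset = A.freeVars) (w : F.W) :
    (∀ σ : ℕ → F.α, (∀ x, σ x ∈ F.D w) → M.truth w σ A) ↔
      (∀ σ : ℕ → F.bar.U, M.bar.truth w σ (TForm.closure xs A.t)) := by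
  constructor
  · intro h σ
    refine (M.bar.truth_closure _ xs w σ).2 fun τ _ hτ => (M.truth_iff_bar_truth_t A w τ).1 ?_
    obtain ⟨d, hd⟩ := F.Dne w
    let ρ : ℕ → F.α := fun y => if y ∈ xs then (τ y).1 else d
    have hρ : ∀ y, ρ y ∈ F.D w := fun y => by
      unfold ρ
      split_ifs with hy
      exacts [hτ y hy, hd]
    have hρτ : Set.EqOn ρ (Subtype.val ∘ τ) A.freeVars := fun y hy =>
      if_pos (show y ∈ xs by simpa [← hfv] using hy)
    exact (M.truth_congr A w hρτ).1 (h ρ hρ)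
  · intro h σ hσ
    let σ' : ℕ → F.bar.U := fun y => ⟨σ y, w, hσ y⟩
    exact (M.truth_iff_bar_truth_t A w σ').2
      ((M.bar.truth_closure _ xs w σ').1 (h σ') σ' (fun _ _ => rfl) fun y _ => hσ y)

/-- For an IQC-model `M` and a world `w`: `A` is intuitionistically true at `w`
(under all `w`-assignments) iff `∀x₁ ⋯ ∀xₙ A^t` is true at `w` in the
associated Q∘S4.t-model `M̄`, where `x₁, …, xₙ` are the free variables of `A`. -/
theorem iqc_truth_iff_bar_closure_truth (F : IFrame) (M : IModel F) (A : IForm)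
    (xs : List ℕ) (hnd : xs.Nodup) (hfv : xs.toFinset = A.freeVars) (w : F.W) :
    (∀ σ : ℕ → F.α, (∀ x, σ x ∈ F.D w) → M.truth w σ A) ↔
      (∀ σ : ℕ → F.bar.U, M.bar.truth w σ (TForm.closure xs A.t)) :=
  iqc_truth_iff_bar_closure_truth_general F M A xs hfv w
end
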